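/- Let A = diag(G₁,...,G_m,[1]) ∈ ℝ^{n×n} (possibly without the 1×1 block [1]) be orthogonal with 2×2 rotation blocks G_j = [[c_j, s_j],[−s_j, c_j]], c_j² + s_j² = 1, s_j ≠ 0, and 0 < c₁ < ⋯ < c_m. Let v₀ be a unit vector with d(A,v₀) ≥ 2. Then any limit point v_* of the ACI(1) sequence {v_k} (w̃_k = (A − α_k I)v_k with α_k = v_kᵀAv_k, w_k = w̃_k/‖w̃_k‖, ṽ_{k+1} = (Aᵀ − β_k I)w_k with β_k = w_kᵀAw_k, v_{k+1} = ṽ_{k+1}/‖ṽ_{k+1}‖) satisfies d(A,v_*) = 2, and the common limit α = β of the Rayleigh quotient sequences equals the real part c_j of some eigenvalue of A; moreover v_* is supported in exactly one 2×2 block. -/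

import Mathlib

open Polynomial Filter Topology Matrix

noncomputable section

def mulv {ι : Type*} [Fintype ι] (A : Matrix ι ι ℝ) (v : EuclideanSpace ℝ ι) :
    EuclideanSpace ℝ ι :=
  (WithLp.equiv 2 (ι → ℝ)).symm (A.mulVec ((WithLp.equiv 2 (ι → ℝ)) v))

def Krylov {ι : Type*} [Fintype ι] [DecidableEq ι] (A : Matrix ι ι ℝ) (s : ℕ) (v : EuclideanSpace ℝ ι) :
    Submodule ℝ (EuclideanSpace ℝ ι) :=
  Submodule.span ℝ (Set.range fun i : Fin s => mulv (A ^ (i : ℕ)) v)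

def IsArnoldiProj {ι : Type*} [Fintype ι] [DecidableEq ι] (A : Matrix ι ι ℝ) (s : ℕ)
    (v w : EuclideanSpace ℝ ι) : Prop :=
  w - mulv (A ^ s) v ∈ Krylov A s v ∧ ∀ u ∈ Krylov A s v, inner ℝ w u = (0 : ℝ)

def vgrade {ι : Type*} [Fintype ι] [DecidableEq ι] (A : Matrix ι ι ℝ)
    (v : EuclideanSpace ℝ ι) : ℕ :=
  sInf {d | ∃ p : ℝ[X], p ≠ 0 ∧ p.natDegree = d ∧ mulv (aeval A p) v = 0}

def dmin {ι : Type*} [Fintype ι] [DecidableEq ι] (A : Matrix ι ι ℝ) : ℕ :=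
  (minpoly ℝ A).natDegree

def Phi {ι : Type*} [Fintype ι] [DecidableEq ι] (A : Matrix ι ι ℝ) (s : ℕ) : ℝ :=
  sSup {r | ∃ v : EuclideanSpace ℝ ι, ‖v‖ = 1 ∧
    r = sInf {t | ∃ q : ℝ[X], q.Monic ∧ q.natDegree = s ∧ t = ‖mulv (aeval A q) v‖}}

def opNorm {ι : Type*} [Fintype ι] [DecidableEq ι] (A : Matrix ι ι ℝ) : ℝ :=
  ‖Matrix.toEuclideanCLM (𝕜 := ℝ) A‖

def blockRot (m e : ℕ) (c s : Fin m → ℝ) :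
    Matrix ((Fin m × Fin 2) ⊕ Fin e) ((Fin m × Fin 2) ⊕ Fin e) ℝ :=
  fun i j => match i, j with
  | Sum.inl (a, x), Sum.inl (b, y) =>
      if a = b then
        (if x = y then c a else if (x : ℕ) = 0 then s a else -(s a))
      else 0
  | Sum.inr i, Sum.inr j => if i = j then 1 else 0
  | _, _ => 0

/-!
For an orthogonal `U` and a unit vector `x` with Rayleigh quotient `ρ(x) = ⟪x, U x⟫`, the ACI(1)
half-step `y = (U x - ρ(x) x) / ‖U x - ρ(x) x‖` satisfies
`2 (ρ(x) - ρ(y)) (1 - ρ(x)²) = ρ(x) ‖U x + U⁻¹ x - 2 ρ(x) x‖²`.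
The second half-step is the same map for `U⁻¹`, which has the same Rayleigh quotients, so when
the symmetric part of `U` is positive definite the quotients interlace,
`α_{k+1} ≤ β_k ≤ α_k`, and converge to a common limit `L`. Since `d(A, v₀) ≥ 2`, `v₀` is not
fixed by `A`, so `α₀ < 1` and every normalisation is well defined. Passing to the limit in the
identity along a convergent subsequence shows that every limit point `v⋆` satisfies
`(U + U⁻¹) v⋆ = 2 L v⋆` with `L = ρ(v⋆) ∈ (0, 1)`.

For `A = blockRot` the symmetric part is `diag(c₁ I₂, …, c_m I₂, 1)`, whose eigenvalues are
distinct, so `v⋆` is supported in the single block `j` with `c_j = L`. Then `A² - 2 L A + 1`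
annihilates `v⋆`, while `v⋆` is not an eigenvector of `A` because `|L| < 1`; hence its grade is 2.
-/

open scoped RealInnerProductSpace

namespace LinearIsometryEquiv

variable {E : Type*} [NormedAddCommGroup E] [InnerProductSpace ℝ E] (U : E ≃ₗᵢ[ℝ] E)

def aciHalfStep (x : E) : E := ‖U x - ⟪x, U x⟫ • x‖⁻¹ • (U x - ⟪x, U x⟫ • x)

def symmResidual (x : E) : E := U x + U.symm x - (2 * ⟪x, U x⟫) • x

theorem inner_symm_self (x : E) : ⟪x, U.symm x⟫ = ⟪x, U x⟫ := by
  rw [← U.inner_map_map, U.apply_symm_apply, real_inner_comm]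

theorem continuous_symmResidual : Continuous U.symmResidual := by
  unfold symmResidual
  fun_prop

variable {U} {x : E}

theorem norm_sq_map_sub_rayleigh_smul (hx : ‖x‖ = 1) :
    ‖U x - ⟪x, U x⟫ • x‖ ^ 2 = 1 - ⟪x, U x⟫ ^ 2 := by
  have hxx : ⟪x, x⟫ = 1 := by rw [real_inner_self_eq_norm_sq, hx, one_pow]
  rw [← real_inner_self_eq_norm_sq]
  simp only [inner_sub_left, inner_sub_right, real_inner_smul_left, real_inner_smul_right,
    U.inner_map_map, hxx, real_inner_comm x]
  ring

theorem two_mul_inner_map_sub_rayleigh_smul (hx : ‖x‖ = 1) :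
    2 * ⟪U x - ⟪x, U x⟫ • x, U (U x - ⟪x, U x⟫ • x)⟫ =
      2 * ⟪x, U x⟫ * (1 - ⟪x, U x⟫ ^ 2) - ⟪x, U x⟫ * ‖U.symmResidual x‖ ^ 2 := by
  have hxx : ⟪x, x⟫ = 1 := by rw [real_inner_self_eq_norm_sq, hx, one_pow]
  have hUS : ⟪U x, U.symm x⟫ = ⟪x, U (U x)⟫ := by
    rw [← U.inner_map_map, U.apply_symm_apply, real_inner_comm]
  have hSS : ⟪U.symm x, U.symm x⟫ = 1 := by rw [U.symm.inner_map_map, hxx]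
  rw [symmResidual, ← real_inner_self_eq_norm_sq]
  simp only [map_sub, map_smul, inner_sub_left, inner_sub_right, inner_add_left, inner_add_right,
    real_inner_smul_left, real_inner_smul_right, U.inner_map_map, hxx, hUS, hSS,
    inner_symm_self, real_inner_comm x, real_inner_comm (U x) (U.symm x)]
  ring

theorem norm_aciHalfStep (hx : ‖x‖ = 1) (ha : ⟪x, U x⟫ ^ 2 < 1) : ‖U.aciHalfStep x‖ = 1 := by
  have hz := norm_sq_map_sub_rayleigh_smul (U := U) hx
  refine norm_smul_inv_norm fun h => ?_
  rw [h, norm_zero] at hz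
  linarith

theorem rayleigh_drop_aciHalfStep (hx : ‖x‖ = 1) (ha : ⟪x, U x⟫ ^ 2 < 1) :
    2 * (⟪x, U x⟫ - ⟪U.aciHalfStep x, U (U.aciHalfStep x)⟫) * (1 - ⟪x, U x⟫ ^ 2) =
      ⟪x, U x⟫ * ‖U.symmResidual x‖ ^ 2 := by
  set z := U x - ⟪x, U x⟫ • x
  have hz : ‖z‖ ^ 2 = 1 - ⟪x, U x⟫ ^ 2 := norm_sq_map_sub_rayleigh_smul hx
  have hz0 : ‖z‖ ≠ 0 := by
    intro h
    rw [h] at hz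
    linarith
  have hyz : ⟪U.aciHalfStep x, U (U.aciHalfStep x)⟫ * ‖z‖ ^ 2 = ⟪z, U z⟫ := by
    rw [show U.aciHalfStep x = ‖z‖⁻¹ • z from rfl, map_smul, real_inner_smul_left,
      real_inner_smul_right]
    field_simp
  linear_combination -two_mul_inner_map_sub_rayleigh_smul (U := U) hx - 2 * hyz +
    2 * ⟪U.aciHalfStep x, U (U.aciHalfStep x)⟫ * hz

theorem rayleigh_aciHalfStep_le (hx : ‖x‖ = 1) (ha₀ : 0 ≤ ⟪x, U x⟫) (ha₁ : ⟪x, U x⟫ < 1) :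
    ⟪U.aciHalfStep x, U (U.aciHalfStep x)⟫ ≤ ⟪x, U x⟫ := by
  have ha : ⟪x, U x⟫ ^ 2 < 1 := by nlinarith
  have : 0 ≤ 2 * (⟪x, U x⟫ - ⟪U.aciHalfStep x, U (U.aciHalfStep x)⟫) * (1 - ⟪x, U x⟫ ^ 2) :=
    rayleigh_drop_aciHalfStep hx ha ▸ by positivity
  nlinarith

theorem rayleigh_lt_one (hx : ‖x‖ = 1) (hfix : U x ≠ x) : ⟪x, U x⟫ < 1 := by
  have hle : ⟪x, U x⟫ ≤ 1 := by simpa [hx] using real_inner_le_norm x (U x)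
  refine hle.lt_of_ne fun h => hfix ?_
  have := norm_sq_map_sub_rayleigh_smul (U := U) hx
  rw [h, one_smul] at this
  simpa [sub_eq_zero] using this

theorem sq_eq_one_of_map_eq_smul {L μ : ℝ} (hx : x ≠ 0) (h : U x + U.symm x = (2 * L) • x)
    (hμ : U x = μ • x) : L ^ 2 = 1 := by
  have hμ₂ : μ * μ = 1 := by
    have := congrArg norm hμ
    rw [U.norm_map, norm_smul, Real.norm_eq_abs] at this
    have hμ₁ : |μ| = 1 := (mul_eq_right₀ (norm_ne_zero_iff.mpr hx)).mp this.symm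
    rw [← abs_mul_abs_self, hμ₁, one_mul]
  have hsymm : U.symm x = μ • x := by
    have hx' : x = μ • U.symm x := by rw [← map_smul, ← hμ, U.symm_apply_apply]
    conv_rhs => rw [hx', smul_smul, hμ₂, one_smul]
  rw [hμ, hsymm, ← add_smul] at h
  have : μ = L := by linarith [smul_left_injective ℝ hx h]
  rw [← this, sq, hμ₂]

end LinearIsometryEquiv

structure IsACI1 {E : Type*} [NormedAddCommGroup E] [InnerProductSpace ℝ E] (U : E ≃ₗᵢ[ℝ] E)
    (v w : ℕ → E) (α β : ℕ → ℝ) : Prop where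
  rayleigh_v : ∀ k, α k = ⟪v k, U (v k)⟫
  w_eq : ∀ k, w k = U.aciHalfStep (v k)
  rayleigh_w : ∀ k, β k = ⟪w k, U (w k)⟫
  v_succ : ∀ k, v (k + 1) = U.symm.aciHalfStep (w k)

namespace IsACI1

variable {E : Type*} [NormedAddCommGroup E] [InnerProductSpace ℝ E] {U : E ≃ₗᵢ[ℝ] E}
  {v w : ℕ → E} {α β : ℕ → ℝ}

theorem rayleigh_pos (h : IsACI1 U v w α β) (hpos : ∀ x ≠ 0, 0 < ⟪x, U x⟫) {k : ℕ}
    (hv : ‖v k‖ = 1) : 0 < α k :=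
  h.rayleigh_v k ▸ hpos _ (norm_ne_zero_iff.mp (by simp [hv]))

theorem step (h : IsACI1 U v w α β) (hpos : ∀ x ≠ 0, 0 < ⟪x, U x⟫) {k : ℕ} (hv : ‖v k‖ = 1)
    (hα : α k < 1) : ‖v (k + 1)‖ = 1 ∧ α (k + 1) ≤ β k ∧ β k ≤ α k := by
  have hα₀ := h.rayleigh_pos hpos hv
  have hw : ‖w k‖ = 1 := h.w_eq k ▸ U.norm_aciHalfStep hv (by rw [← h.rayleigh_v]; nlinarith)
  have hβα : β k ≤ α k := by
    rw [h.rayleigh_w, h.w_eq, h.rayleigh_v]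
    exact U.rayleigh_aciHalfStep_le hv (h.rayleigh_v k ▸ hα₀.le) (h.rayleigh_v k ▸ hα)
  have hβ₀ : 0 < β k := h.rayleigh_w k ▸ hpos _ (norm_ne_zero_iff.mp (by simp [hw]))
  have hβ : β k = ⟪w k, U.symm (w k)⟫ := by rw [U.inner_symm_self, h.rayleigh_w]
  rw [hβ] at hβ₀ hβα
  refine ⟨h.v_succ k ▸ U.symm.norm_aciHalfStep hw (by nlinarith), ?_, hβ ▸ hβα⟩
  rw [h.rayleigh_v, ← U.inner_symm_self, h.v_succ, hβ]
  exact U.symm.rayleigh_aciHalfStep_le hw hβ₀.le (hβα.trans_lt hα)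

theorem norm_eq_one_and_lt_one (h : IsACI1 U v w α β) (hpos : ∀ x ≠ 0, 0 < ⟪x, U x⟫)
    (hv₀ : ‖v 0‖ = 1) (hα₀ : α 0 < 1) : ∀ k, ‖v k‖ = 1 ∧ α k < 1
  | 0 => ⟨hv₀, hα₀⟩
  | k + 1 =>
    have ⟨hv, hα⟩ := h.norm_eq_one_and_lt_one hpos hv₀ hα₀ k
    have ⟨hv', hαβ, hβα⟩ := h.step hpos hv hα
    ⟨hv', hαβ.trans_lt (hβα.trans_lt hα)⟩

theorem antitone_rayleigh (h : IsACI1 U v w α β) (hpos : ∀ x ≠ 0, 0 < ⟪x, U x⟫)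
    (hv₀ : ‖v 0‖ = 1) (hα₀ : α 0 < 1) : Antitone α :=
  antitone_nat_of_succ_le fun k =>
    have ⟨hv, hα⟩ := h.norm_eq_one_and_lt_one hpos hv₀ hα₀ k
    have ⟨_, hαβ, hβα⟩ := h.step hpos hv hα
    hαβ.trans hβα

theorem norm_limit_point (h : IsACI1 U v w α β) (hpos : ∀ x ≠ 0, 0 < ⟪x, U x⟫)
    (hv₀ : ‖v 0‖ = 1) (hα₀ : α 0 < 1) {φ : ℕ → ℕ} {v' : E}
    (hlim : Tendsto (v ∘ φ) atTop (𝓝 v')) : ‖v'‖ = 1 := by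
  refine tendsto_nhds_unique ((continuous_norm.tendsto _).comp hlim) ?_
  simp [Function.comp_def, h.norm_eq_one_and_lt_one hpos hv₀ hα₀]

theorem tendsto_rayleigh (h : IsACI1 U v w α β) (hpos : ∀ x ≠ 0, 0 < ⟪x, U x⟫)
    (hv₀ : ‖v 0‖ = 1) (hα₀ : α 0 < 1) {φ : ℕ → ℕ} (hφ : StrictMono φ) {v' : E}
    (hlim : Tendsto (v ∘ φ) atTop (𝓝 v')) :
    Tendsto α atTop (𝓝 ⟪v', U v'⟫) ∧ Tendsto β atTop (𝓝 ⟪v', U v'⟫) := by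
  have hinv := h.norm_eq_one_and_lt_one hpos hv₀ hα₀
  have hαφ : Tendsto (α ∘ φ) atTop (𝓝 ⟪v', U v'⟫) := by
    have : Continuous fun x => ⟪x, U x⟫ := by fun_prop
    simpa [Function.comp_def, h.rayleigh_v] using (this.tendsto v').comp hlim
  have hα : Tendsto α atTop (𝓝 ⟪v', U v'⟫) := by
    have hinf := tendsto_atTop_ciInf (h.antitone_rayleigh hpos hv₀ hα₀)
      ⟨0, by rintro _ ⟨k, rfl⟩; exact (h.rayleigh_pos hpos (hinv k).1).le⟩
    rwa [tendsto_nhds_unique (hinf.comp hφ.tendsto_atTop) hαφ] at hinf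
  have hchain k := h.step hpos (hinv k).1 (hinv k).2
  exact ⟨hα, tendsto_of_tendsto_of_tendsto_of_le_of_le (hα.comp (tendsto_add_atTop_nat 1)) hα
    (fun k => (hchain k).2.1) fun k => (hchain k).2.2⟩

theorem symmResidual_limit_point (h : IsACI1 U v w α β) (hpos : ∀ x ≠ 0, 0 < ⟪x, U x⟫)
    (hv₀ : ‖v 0‖ = 1) (hα₀ : α 0 < 1) {φ : ℕ → ℕ} (hφ : StrictMono φ) {v' : E}
    (hlim : Tendsto (v ∘ φ) atTop (𝓝 v')) : U.symmResidual v' = 0 := by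
  set L := ⟪v', U v'⟫
  have hinv := h.norm_eq_one_and_lt_one hpos hv₀ hα₀
  obtain ⟨hα, hβ⟩ := h.tendsto_rayleigh hpos hv₀ hα₀ hφ hlim
  have hdrop k : 2 * (α k - β k) * (1 - α k ^ 2) = α k * ‖U.symmResidual (v k)‖ ^ 2 := by
    have hα2 : α k ^ 2 < 1 := by nlinarith [h.rayleigh_pos hpos (hinv k).1, (hinv k).2]
    rw [h.rayleigh_v] at hα2
    rw [h.rayleigh_w, h.w_eq, h.rayleigh_v]
    exact U.rayleigh_drop_aciHalfStep (hinv k).1 hα2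
  have hlhs : Tendsto (fun k => 2 * (α (φ k) - β (φ k)) * (1 - α (φ k) ^ 2)) atTop
      (𝓝 (2 * (L - L) * (1 - L ^ 2))) :=
    (((hα.sub hβ).const_mul 2).mul ((hα.pow 2).const_sub 1)).comp hφ.tendsto_atTop
  have hrhs : Tendsto (fun k => α (φ k) * ‖U.symmResidual (v (φ k))‖ ^ 2) atTop
      (𝓝 (L * ‖U.symmResidual v'‖ ^ 2)) :=
    (hα.comp hφ.tendsto_atTop).mul
      ((((continuous_norm.comp U.continuous_symmResidual).tendsto v').comp hlim).pow 2)
  have hzero : L * ‖U.symmResidual v'‖ ^ 2 = 0 := by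
    rw [tendsto_nhds_unique hrhs (by simpa only [hdrop] using hlhs)]
    ring
  have hL : 0 < L := hpos v' (norm_ne_zero_iff.mp (by simp [h.norm_limit_point hpos hv₀ hα₀ hlim]))
  simpa [hL.ne'] using hzero

end IsACI1

section Matrix

variable {ι : Type*} [Fintype ι] [DecidableEq ι]

theorem mulv_eq_toEuclideanCLM (A : Matrix ι ι ℝ) (x : EuclideanSpace ℝ ι) :
    mulv A x = toEuclideanCLM (n := ι) (𝕜 := ℝ) A x := rfl

theorem mulv_aeval (A : Matrix ι ι ℝ) (p : ℝ[X]) (x : EuclideanSpace ℝ ι) :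
    mulv (aeval A p) x = aeval (toEuclideanCLM (n := ι) (𝕜 := ℝ) A) p x := by
  rw [mulv_eq_toEuclideanCLM, aeval_algHom_apply]

def orthogonalIsometry (A : Matrix ι ι ℝ) (hA : A ∈ orthogonalGroup ι ℝ) :
    EuclideanSpace ℝ ι ≃ₗᵢ[ℝ] EuclideanSpace ℝ ι :=
  Unitary.linearIsometryEquiv ⟨toEuclideanCLM (n := ι) (𝕜 := ℝ) A, Unitary.map_mem _ hA⟩

theorem orthogonalIsometry_apply (A : Matrix ι ι ℝ) (hA : A ∈ orthogonalGroup ι ℝ)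
    (x : EuclideanSpace ℝ ι) : orthogonalIsometry A hA x = mulv A x := rfl

theorem mulv_transpose (A : Matrix ι ι ℝ) (x : EuclideanSpace ℝ ι) :
    mulv Aᵀ x = star (toEuclideanCLM (n := ι) (𝕜 := ℝ) A) x := by
  rw [mulv_eq_toEuclideanCLM, ← conjTranspose_eq_transpose_of_trivial, ← star_eq_conjTranspose,
    map_star]

theorem inner_mulv_transpose (A : Matrix ι ι ℝ) (x y : EuclideanSpace ℝ ι) :
    ⟪x, mulv Aᵀ y⟫ = ⟪mulv A x, y⟫ := by
  rw [mulv_transpose, ContinuousLinearMap.star_eq_adjoint,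
    ContinuousLinearMap.adjoint_inner_right]
  rfl

theorem orthogonalIsometry_symm_apply (A : Matrix ι ι ℝ) (hA : A ∈ orthogonalGroup ι ℝ)
    (x : EuclideanSpace ℝ ι) : (orthogonalIsometry A hA).symm x = mulv Aᵀ x := by
  rw [mulv_transpose]
  rfl

theorem vgrade_le_natDegree {A : Matrix ι ι ℝ} {x : EuclideanSpace ℝ ι} {p : ℝ[X]} (hp : p ≠ 0)
    (h : mulv (aeval A p) x = 0) : vgrade A x ≤ p.natDegree :=
  Nat.sInf_le ⟨p, hp, rfl, h⟩

theorem exists_natDegree_eq_vgrade (A : Matrix ι ι ℝ) (x : EuclideanSpace ℝ ι) :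
    ∃ p : ℝ[X], p ≠ 0 ∧ p.natDegree = vgrade A x ∧ mulv (aeval A p) x = 0 :=
  Nat.sInf_mem (s := {d | ∃ p : ℝ[X], p ≠ 0 ∧ p.natDegree = d ∧ mulv (aeval A p) x = 0})
    ⟨_, minpoly ℝ A, minpoly.ne_zero (Matrix.isIntegral A), rfl, by
      rw [minpoly.aeval, mulv_eq_toEuclideanCLM, map_zero]
      rfl⟩

theorem vgrade_le_one_of_mulv_eq_smul {A : Matrix ι ι ℝ} {x : EuclideanSpace ℝ ι} {μ : ℝ}
    (h : mulv A x = μ • x) : vgrade A x ≤ 1 := by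
  refine (natDegree_X_sub_C μ).symm ▸ vgrade_le_natDegree (X_sub_C_ne_zero μ) ?_
  rw [mulv_aeval]
  simp [← mulv_eq_toEuclideanCLM, h]

theorem two_le_vgrade {A : Matrix ι ι ℝ} {x : EuclideanSpace ℝ ι} (hx : x ≠ 0)
    (h : ∀ μ : ℝ, mulv A x ≠ μ • x) : 2 ≤ vgrade A x := by
  obtain ⟨p, hp, hdeg, hpx⟩ := exists_natDegree_eq_vgrade A x
  by_contra! hlt
  rw [eq_X_add_C_of_natDegree_le_one (by omega : p.natDegree ≤ 1)] at hpx hp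
  rw [mulv_aeval] at hpx
  simp only [map_add, map_mul, aeval_C, aeval_X, _root_.add_apply, mul_apply_eq_comp,
    ContinuousLinearMap.algebraMap_apply] at hpx
  rcases eq_or_ne (p.coeff 1) 0 with ha | ha
  · simp [ha] at hp hpx
    exact hx (hpx.resolve_left hp)
  · apply h (-(p.coeff 0 / p.coeff 1))
    rw [mulv_eq_toEuclideanCLM, ← inv_smul_smul₀ ha (toEuclideanCLM (n := ι) (𝕜 := ℝ) A x),
      eq_neg_of_add_eq_zero_left hpx]
    module

theorem vgrade_eq_two {A : Matrix ι ι ℝ} (hA : A ∈ orthogonalGroup ι ℝ) {x : EuclideanSpace ℝ ι}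
    {L : ℝ} (hx : x ≠ 0) (hL : L ^ 2 < 1) (h : mulv A x + mulv Aᵀ x = (2 * L) • x) :
    vgrade A x = 2 := by
  set U := orthogonalIsometry A hA
  rw [← orthogonalIsometry_apply A hA, ← orthogonalIsometry_symm_apply A hA] at h
  refine le_antisymm ?_ (two_le_vgrade hx fun μ hμ => ?_)
  · have hdeg : (X ^ 2 - C (2 * L) * X + 1 : ℝ[X]).natDegree = 2 := by compute_degree!
    refine hdeg ▸ vgrade_le_natDegree (ne_zero_of_natDegree_gt (hdeg ▸ one_lt_two)) ?_
    have hU : U (U x) - (2 * L) • U x + x = 0 :=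
      calc U (U x) - (2 * L) • U x + x = U (U x + U.symm x - (2 * L) • x) := by
            rw [map_sub, map_add, map_smul, U.apply_symm_apply]; abel
        _ = 0 := by rw [h, sub_self, map_zero]
    set T : EuclideanSpace ℝ ι →L[ℝ] EuclideanSpace ℝ ι := toEuclideanCLM (n := ι) (𝕜 := ℝ) A
    have hp : aeval T (X ^ 2 - C (2 * L) * X + 1) = T * T - (2 * L) • T + 1 := by
      simp only [map_add, map_sub, map_mul, aeval_X, aeval_C, map_one, sq,
        Algebra.algebraMap_eq_smul_one, smul_mul_assoc, one_mul, mul_smul]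
    rw [mulv_aeval, hp]
    exact hU
  · rw [← orthogonalIsometry_apply A hA] at hμ
    exact hL.ne (U.sq_eq_one_of_map_eq_smul hx h hμ)

end Matrix

section BlockRot

variable {m e : ℕ} (c s : Fin m → ℝ)

def blockCos (c : Fin m → ℝ) : (Fin m × Fin 2) ⊕ Fin e → ℝ := Sum.elim (fun p => c p.1) 1

theorem blockRot_add_transpose :
    blockRot m e c s + (blockRot m e c s)ᵀ = 2 • diagonal (blockCos c) := by
  ext (⟨a, x⟩ | i) (⟨b, y⟩ | j) <;>
    simp only [blockRot, blockCos, diagonal, Matrix.add_apply, transpose_apply, Matrix.smul_apply,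
      of_apply]
  · fin_cases x <;> fin_cases y <;> by_cases h : a = b <;> simp [h, eq_comm]
    all_goals ring
  all_goals simp [eq_comm]
  split_ifs <;> norm_num

theorem blockRot_mem_orthogonalGroup (hcs : ∀ j, c j ^ 2 + s j ^ 2 = 1) :
    blockRot m e c s ∈ orthogonalGroup _ ℝ := by
  rw [mem_orthogonalGroup_iff']
  ext (⟨a, x⟩ | i) (⟨b, y⟩ | j) <;> simp only [mul_apply, Fintype.sum_sum_type,
    Fintype.sum_prod_type, Fin.sum_univ_two, one_apply, transpose_apply]
  · fin_cases x <;> fin_cases y <;> by_cases h : a = b <;>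
      simp +contextual [blockRot, h, Finset.sum_add_distrib, eq_comm] <;>
      first | linear_combination hcs b | ring
  all_goals simp [blockRot, eq_comm]

theorem mulv_add_mulv_transpose_blockRot (x : EuclideanSpace ℝ ((Fin m × Fin 2) ⊕ Fin e))
    (i : (Fin m × Fin 2) ⊕ Fin e) :
    (mulv (blockRot m e c s) x + mulv (blockRot m e c s)ᵀ x) i = 2 * blockCos c i * x i := by
  rw [mulv_eq_toEuclideanCLM, mulv_eq_toEuclideanCLM, ← _root_.add_apply, ← map_add,
    blockRot_add_transpose]
  simp [mulVec_diagonal, mul_assoc]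

theorem inner_mulv_blockRot_pos (hc : ∀ j, 0 < c j)
    {x : EuclideanSpace ℝ ((Fin m × Fin 2) ⊕ Fin e)} (hx : x ≠ 0) :
    0 < ⟪x, mulv (blockRot m e c s) x⟫ := by
  have hsum : 2 * ⟪x, mulv (blockRot m e c s) x⟫ = ∑ i, 2 * blockCos c i * x i ^ 2 :=
    calc 2 * ⟪x, mulv (blockRot m e c s) x⟫
        = ⟪x, mulv (blockRot m e c s) x + mulv (blockRot m e c s)ᵀ x⟫ := by
          rw [inner_add_right, inner_mulv_transpose, real_inner_comm x]; ring
      _ = ∑ i, 2 * blockCos c i * x i ^ 2 := by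
          simp_rw [PiLp.inner_apply, mulv_add_mulv_transpose_blockRot]
          refine Finset.sum_congr rfl fun i _ => ?_
          rw [RCLike.inner_apply, conj_trivial]
          ring
  have hcos : ∀ i, 0 < blockCos (e := e) c i := by
    rintro (p | i)
    exacts [hc p.1, one_pos]
  obtain ⟨i, hi⟩ : ∃ i, x i ≠ 0 := by
    by_contra! h
    exact hx (by ext i; simp [h])
  have : 0 < ∑ i, 2 * blockCos c i * x i ^ 2 :=
    Finset.sum_pos' (fun i _ => by have := hcos i; positivity)
      ⟨i, Finset.mem_univ _, by have := hcos i; positivity⟩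
  linarith

theorem exists_block_support (hc : Function.Injective c)
    {x : EuclideanSpace ℝ ((Fin m × Fin 2) ⊕ Fin e)} {L : ℝ} (hx : x ≠ 0) (hL : L ≠ 1)
    (h : mulv (blockRot m e c s) x + mulv (blockRot m e c s)ᵀ x = (2 * L) • x) :
    ∃ j, c j = L ∧ ∀ i, (∀ b : Fin 2, i ≠ Sum.inl (j, b)) → x i = 0 := by
  have hcos : ∀ i, x i ≠ 0 → blockCos c i = L := by
    intro i hi
    have := mulv_add_mulv_transpose_blockRot c s x i
    rw [h, PiLp.smul_apply, smul_eq_mul] at this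
    exact mul_right_cancel₀ hi (by linarith)
  have hinr : ∀ k : Fin e, x (Sum.inr k) = 0 := fun k => by_contra fun hk => hL (hcos _ hk).symm
  obtain ⟨i, hi⟩ : ∃ i, x i ≠ 0 := by
    by_contra! h
    exact hx (by ext i; simp [h])
  rcases i with ⟨j, b⟩ | k
  · refine ⟨j, hcos _ hi, ?_⟩
    rintro (⟨a, b'⟩ | k) hne
    · by_contra ha
      have haj : a = j := hc ((hcos _ ha).trans (hcos _ hi).symm)
      exact hne b' (by rw [haj])
    · exact hinr k
  · exact absurd (hinr k) hi

end BlockRot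

theorem aci1_orthogonal_limit_general {m e : ℕ}
    (c s : Fin m → ℝ) (hcs : ∀ j, c j ^ 2 + s j ^ 2 = 1)
    (hc0 : ∀ j, 0 < c j) (hmono : StrictMono c)
    (A : Matrix ((Fin m × Fin 2) ⊕ Fin e) ((Fin m × Fin 2) ⊕ Fin e) ℝ)
    (hA : A = blockRot m e c s)
    (v wt w vt : ℕ → EuclideanSpace ℝ ((Fin m × Fin 2) ⊕ Fin e)) (α β : ℕ → ℝ)
    (hv0 : ‖v 0‖ = 1) (hg : 2 ≤ vgrade A (v 0))
    (hα : ∀ k, α k = (inner ℝ (v k) (mulv A (v k)) : ℝ))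
    (hwt : ∀ k, wt k = mulv A (v k) - α k • v k)
    (hw : ∀ k, w k = ‖wt k‖⁻¹ • wt k)
    (hβ : ∀ k, β k = (inner ℝ (w k) (mulv A (w k)) : ℝ))
    (hvt : ∀ k, vt (k + 1) = mulv Aᵀ (w k) - β k • w k)
    (hv : ∀ k, v (k + 1) = ‖vt (k + 1)‖⁻¹ • vt (k + 1))
    (vstar : EuclideanSpace ℝ ((Fin m × Fin 2) ⊕ Fin e))
    (hlim : ∃ φ : ℕ → ℕ, StrictMono φ ∧ Tendsto (v ∘ φ) atTop (𝓝 vstar)) :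
    vgrade A vstar = 2 ∧
    ∃! j : Fin m, Tendsto α atTop (𝓝 (c j)) ∧ Tendsto β atTop (𝓝 (c j)) ∧
      ∀ x : (Fin m × Fin 2) ⊕ Fin e, (∀ i : Fin 2, x ≠ Sum.inl (j, i)) →
        (WithLp.equiv 2 (((Fin m × Fin 2) ⊕ Fin e) → ℝ)) vstar x = 0 := by
  have hA_orth : A ∈ orthogonalGroup _ ℝ := hA ▸ blockRot_mem_orthogonalGroup c s hcs
  set U := orthogonalIsometry _ hA_orth
  have hU x : U x = mulv A x := orthogonalIsometry_apply _ hA_orth x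
  have hUsymm x : U.symm x = mulv Aᵀ x := orthogonalIsometry_symm_apply _ hA_orth x
  have hpos x (hx : x ≠ 0) : 0 < ⟪x, U x⟫ := by
    rw [hU, hA]
    exact inner_mulv_blockRot_pos c s hc0 hx
  have hACI : IsACI1 U v w α β :=
    { rayleigh_v := fun k => by rw [hU, hα]
      w_eq := fun k => by rw [hw, hwt, LinearIsometryEquiv.aciHalfStep, hU, hα]
      rayleigh_w := fun k => by rw [hU, hβ]
      v_succ := fun k => by
        rw [hv, hvt, LinearIsometryEquiv.aciHalfStep, U.inner_symm_self, hU, hUsymm, hβ] }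
  have hα0 : α 0 < 1 := by
    rw [hα, ← hU]
    refine U.rayleigh_lt_one hv0 fun hfix => ?_
    have := vgrade_le_one_of_mulv_eq_smul (A := A) (μ := 1) (by rw [one_smul, ← hU, hfix])
    omega
  obtain ⟨φ, hφ, hφlim⟩ := hlim
  have hvstar : vstar ≠ 0 :=
    norm_ne_zero_iff.mp (by simp [hACI.norm_limit_point hpos hv0 hα0 hφlim])
  obtain ⟨hαL, hβL⟩ := hACI.tendsto_rayleigh hpos hv0 hα0 hφ hφlim
  have hres := hACI.symmResidual_limit_point hpos hv0 hα0 hφ hφlim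
  set L := ⟪vstar, U vstar⟫
  have hL1 : L < 1 := ((hACI.antitone_rayleigh hpos hv0 hα0).le_of_tendsto hαL 0).trans_lt hα0
  have heig : mulv A vstar + mulv Aᵀ vstar = (2 * L) • vstar := by
    rw [← hU, ← hUsymm]
    exact sub_eq_zero.mp hres
  obtain ⟨j, hj, hsupp⟩ := exists_block_support c s hmono.injective hvstar hL1.ne (hA ▸ heig)
  refine ⟨vgrade_eq_two hA_orth hvstar (by nlinarith [hpos vstar hvstar]) heig,
    j, ⟨hj ▸ hαL, hj ▸ hβL, hsupp⟩, fun j' hj' => ?_⟩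
  exact hmono.injective (tendsto_nhds_unique hj'.1 (hj ▸ hαL))

theorem aci1_orthogonal_limit {m e : ℕ} (hm : 0 < m) (he : e ≤ 1)
    (c s : Fin m → ℝ) (hcs : ∀ j, c j ^ 2 + s j ^ 2 = 1) (hsne : ∀ j, s j ≠ 0)
    (hc0 : ∀ j, 0 < c j) (hmono : StrictMono c)
    (A : Matrix ((Fin m × Fin 2) ⊕ Fin e) ((Fin m × Fin 2) ⊕ Fin e) ℝ)
    (hA : A = blockRot m e c s)
    (v wt w vt : ℕ → EuclideanSpace ℝ ((Fin m × Fin 2) ⊕ Fin e)) (α β : ℕ → ℝ)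
    (hv0 : ‖v 0‖ = 1) (hg : 2 ≤ vgrade A (v 0))
    (hα : ∀ k, α k = (inner ℝ (v k) (mulv A (v k)) : ℝ))
    (hwt : ∀ k, wt k = mulv A (v k) - α k • v k)
    (hw : ∀ k, w k = ‖wt k‖⁻¹ • wt k)
    (hβ : ∀ k, β k = (inner ℝ (w k) (mulv A (w k)) : ℝ))
    (hvt : ∀ k, vt (k + 1) = mulv Aᵀ (w k) - β k • w k)
    (hv : ∀ k, v (k + 1) = ‖vt (k + 1)‖⁻¹ • vt (k + 1))
    (vstar : EuclideanSpace ℝ ((Fin m × Fin 2) ⊕ Fin e))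
    (hlim : ∃ φ : ℕ → ℕ, StrictMono φ ∧ Tendsto (v ∘ φ) atTop (𝓝 vstar)) :
    vgrade A vstar = 2 ∧
    ∃! j : Fin m, Tendsto α atTop (𝓝 (c j)) ∧ Tendsto β atTop (𝓝 (c j)) ∧
      ∀ x : (Fin m × Fin 2) ⊕ Fin e, (∀ i : Fin 2, x ≠ Sum.inl (j, i)) →
        (WithLp.equiv 2 (((Fin m × Fin 2) ⊕ Fin e) → ℝ)) vstar x = 0 :=
  aci1_orthogonal_limit_general c s hcs hc0 hmono A hA v wt w vt α β hv0 hg hα hwt hw hβ hvt hv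
    vstar hlim
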